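/- If G, M1, …, Mn are non-empty graphs with |V(G)| = n, then there is a GS derivation from M1 ⊗ ⋯ ⊗ Mn to G⟨M1, …, Mn⟩. -/

import Mathlib

namespace GSP

/-- Atoms: a propositional variable (coded by a natural number) with a polarity. -/
abbrev Atom := ℕ × Bool

/-- The dual atom. -/
def dualAtom (a : Atom) : Atom := (a.1, !a.2)

/-- A finite, simple, undirected graph whose vertices are labelled by atoms. -/
structure LGraph where
  V : Type
  [fintype : Fintype V]
  adj : V → V → Prop
  symm : ∀ {v w : V}, adj v w → adj w v
  irrefl : ∀ v : V, ¬ adj v v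
  label : V → Atom

attribute [instance] LGraph.fintype

namespace LGraph

/-- An isomorphism of labelled graphs: a vertex bijection preserving labels and
preserving and reflecting edges. -/
structure Iso (G H : LGraph) where
  toEquiv : G.V ≃ H.V
  adj_iff : ∀ v w : G.V, G.adj v w ↔ H.adj (toEquiv v) (toEquiv w)
  label_eq : ∀ v : G.V, H.label (toEquiv v) = G.label v

/-- `G ≅ H` : the graphs `G` and `H` are isomorphic. -/
def iso (G H : LGraph) : Prop := Nonempty (Iso G H)

/-- The empty graph. -/
def empty : LGraph where
  V := Empty
  adj _ _ := False
  symm h := h.elim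
  irrefl v := v.elim
  label v := v.elim

/-- The single-vertex graph labelled by the atom `a`. -/
def single (a : Atom) : LGraph where
  V := Unit
  adj _ _ := False
  symm h := h.elim
  irrefl _ h := h
  label _ := a

def parAdj (G H : LGraph) : G.V ⊕ H.V → G.V ⊕ H.V → Prop
  | .inl a, .inl b => G.adj a b
  | .inr a, .inr b => H.adj a b
  | _, _ => False

/-- The par `G ⅋ H` : disjoint union of `G` and `H`. -/
def par (G H : LGraph) : LGraph where
  V := G.V ⊕ H.V
  adj := parAdj G H
  symm := by
    rintro (a | a) (b | b) h
    · exact G.symm h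
    · exact h.elim
    · exact h.elim
    · exact H.symm h
  irrefl := by
    rintro (a | a) h
    · exact G.irrefl a h
    · exact H.irrefl a h
  label := Sum.elim G.label H.label

def tensorAdj (G H : LGraph) : G.V ⊕ H.V → G.V ⊕ H.V → Prop
  | .inl a, .inl b => G.adj a b
  | .inr a, .inr b => H.adj a b
  | .inl _, .inr _ => True
  | .inr _, .inl _ => True

/-- The tensor `G ⊗ H` : join of `G` and `H` (disjoint union plus all edges in between). -/
def tensor (G H : LGraph) : LGraph where
  V := G.V ⊕ H.V
  adj := tensorAdj G H
  symm := by
    rintro (a | a) (b | b) h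
    · exact G.symm h
    · exact trivial
    · exact trivial
    · exact H.symm h
  irrefl := by
    rintro (a | a) h
    · exact G.irrefl a h
    · exact H.irrefl a h
  label := Sum.elim G.label H.label

/-- The dual graph `Ḡ` : same vertices, complemented edges, dualized labels. -/
def dual (G : LGraph) : LGraph where
  V := G.V
  adj v w := v ≠ w ∧ ¬ G.adj v w
  symm h := ⟨fun e => h.1 e.symm, fun h' => h.2 (G.symm h')⟩
  irrefl _ h := h.1 rfl
  label v := dualAtom (G.label v)

def plugAdj (C : LGraph) (R : Set C.V) (X : LGraph) : C.V ⊕ X.V → C.V ⊕ X.V → Prop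
  | .inl a, .inl b => C.adj a b
  | .inr a, .inr b => X.adj a b
  | .inl a, .inr _ => a ∈ R
  | .inr _, .inl b => b ∈ R

/-- `C[X]_R` : the graph obtained from the context `C[·]_R` by inserting the graph `X`
as a module whose vertices are adjacent exactly to the vertices in `R`. -/
def plug (C : LGraph) (R : Set C.V) (X : LGraph) : LGraph where
  V := C.V ⊕ X.V
  adj := plugAdj C R X
  symm := by
    rintro (a | a) (b | b) h
    · exact C.symm h
    · exact h
    · exact h
    · exact X.symm h
  irrefl := by
    rintro (a | a) h
    · exact C.irrefl a h
    · exact X.irrefl a h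
  label := Sum.elim C.label X.label

def compAdj (G : LGraph) (H : G.V → LGraph) :
    (Σ v : G.V, (H v).V) → (Σ v : G.V, (H v).V) → Prop := fun x y =>
  (∃ (v : G.V) (a b : (H v).V), x = ⟨v, a⟩ ∧ y = ⟨v, b⟩ ∧ (H v).adj a b) ∨
    (x.1 ≠ y.1 ∧ G.adj x.1 y.1)

/-- The composition `G⟨H v₁, …, H vₙ⟩` of the family `H` via the graph `G`:
replace each vertex `v` of `G` by the graph `H v`. -/
def comp (G : LGraph) (H : G.V → LGraph) : LGraph where
  V := Σ v : G.V, (H v).V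
  adj := compAdj G H
  symm := by
    rintro x y (⟨v, a, b, hx, hy, hab⟩ | ⟨hne, hadj⟩)
    · exact Or.inl ⟨v, b, a, hy, hx, (H v).symm hab⟩
    · exact Or.inr ⟨hne.symm, G.symm hadj⟩
  irrefl := by
    rintro ⟨v, a⟩ (⟨w, x, y, hx, hy, hxy⟩ | ⟨hne, _⟩)
    · have h := hx.symm.trans hy
      obtain rfl : x = y := by simpa using h
      exact (H w).irrefl x hxy
    · exact hne rfl
  label x := (H x.1).label x.2

/-- A module of `G` : a set `M` of vertices such that every vertex outside `M`
is adjacent either to all vertices of `M` or to none of them. -/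
def IsModule (G : LGraph) (M : Set G.V) : Prop :=
  ∀ v ∉ M, ∀ x ∈ M, ∀ y ∈ M, (G.adj v x ↔ G.adj v y)

/-- A prime graph: at least 2 vertices and only trivial modules. -/
def Prime (G : LGraph) : Prop :=
  2 ≤ Fintype.card G.V ∧
    ∀ M : Set G.V, G.IsModule M → M = ∅ ∨ (∃ v, M = {v}) ∨ M = Set.univ

/-- `G` is `P₄`-free: no four distinct vertices induce a path on 4 vertices. -/
def P4Free (G : LGraph) : Prop :=
  ¬ ∃ v₁ v₂ v₃ v₄ : G.V,
      v₁ ≠ v₂ ∧ v₁ ≠ v₃ ∧ v₁ ≠ v₄ ∧ v₂ ≠ v₃ ∧ v₂ ≠ v₄ ∧ v₃ ≠ v₄ ∧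
      G.adj v₁ v₂ ∧ G.adj v₂ v₃ ∧ G.adj v₃ v₄ ∧
      ¬ G.adj v₁ v₃ ∧ ¬ G.adj v₁ v₄ ∧ ¬ G.adj v₂ v₄

end LGraph

open LGraph

/-- The `n`-fold tensor `X₁ ⊗ ⋯ ⊗ Xₙ`. -/
def bigTensor : (n : ℕ) → (Fin n → LGraph) → LGraph
  | 0, _ => LGraph.empty
  | n + 1, F => (F 0).tensor (bigTensor n fun i => F i.succ)

/-- The `n`-fold par `X₁ ⅋ ⋯ ⅋ Xₙ`. -/
def bigPar : (n : ℕ) → (Fin n → LGraph) → LGraph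
  | 0, _ => LGraph.empty
  | n + 1, F => (F 0).par (bigPar n fun i => F i.succ)

/-- The inference rules of system GS (premise, conclusion). -/
inductive GSRule : LGraph → LGraph → Prop
  /-- ai↓ : premise `∅`, conclusion `ā ⅋ a`. -/
  | ai (a : Atom) : GSRule LGraph.empty ((single (dualAtom a)).par (single a))
  /-- ss↓ : premise `B[A]_S`, conclusion `B ⅋ A`, for `A ≠ ∅` and `S ≠ ∅`. -/
  | ss (A B : LGraph) (S : Set B.V) :
      Nonempty A.V → S ≠ ∅ → GSRule (B.plug S A) (B.par A)
  /-- p↓ : premise `(M₁ ⅋ N₁) ⊗ ⋯ ⊗ (Mₙ ⅋ Nₙ)`, conclusion `P̄⟨M₁,…,Mₙ⟩ ⅋ P⟨N₁,…,Nₙ⟩`,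
  for `P` prime with `n = |V(P)| ≥ 4` and all `Mᵢ ≠ ∅`. -/
  | p (n : ℕ) (P : LGraph) (e : P.V ≃ Fin n) (M N : Fin n → LGraph) :
      P.Prime → 4 ≤ n → (∀ i, Nonempty (M i).V) →
      GSRule (bigTensor n fun i => (M i).par (N i))
        ((P.dual.comp fun v => M (e v)).par (P.comp fun v => N (e v)))

/-- The "up" rules ai↑, ss↑, p↑ (premise, conclusion). -/
inductive UpRule : LGraph → LGraph → Prop
  /-- ai↑ : premise `a ⊗ ā`, conclusion `∅`. -/
  | ai (a : Atom) : UpRule ((single a).tensor (single (dualAtom a))) LGraph.empty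
  /-- ss↑ : premise `B ⊗ A`, conclusion `B[A]_S`, for `A ≠ ∅` and `S ≠ V(B)`. -/
  | ss (A B : LGraph) (S : Set B.V) :
      Nonempty A.V → S ≠ Set.univ → UpRule (B.tensor A) (B.plug S A)
  /-- p↑ : premise `P⟨M₁,…,Mₙ⟩ ⊗ P̄⟨N₁,…,Nₙ⟩`, conclusion `(M₁ ⊗ N₁) ⅋ ⋯ ⅋ (Mₙ ⊗ Nₙ)`,
  for `P` prime with `n = |V(P)| ≥ 4` and all `Mᵢ ≠ ∅`. -/
  | p (n : ℕ) (P : LGraph) (e : P.V ≃ Fin n) (M N : Fin n → LGraph) :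
      P.Prime → 4 ≤ n → (∀ i, Nonempty (M i).V) →
      UpRule ((P.comp fun v => M (e v)).tensor (P.dual.comp fun v => N (e v)))
        (bigPar n fun i => (M i).tensor (N i))

/-- The rules of system SGS : the rules of GS together with their duals. -/
def SGSRule (G H : LGraph) : Prop := GSRule G H ∨ UpRule G H

/-- A single inference step in a system: inside some context, replace a module
isomorphic to the premise of a rule by the corresponding conclusion. -/
def Step (Rules : LGraph → LGraph → Prop) (G H : LGraph) : Prop :=
  ∃ (C : LGraph) (R : Set C.V) (p c : LGraph),
    Rules p c ∧ G.iso (C.plug R p) ∧ H.iso (C.plug R c)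

/-- A derivation in a system from `G` to `H` : a finite sequence of inference steps
and isomorphisms leading from `G` to `H`. -/
def Deriv (Rules : LGraph → LGraph → Prop) (G H : LGraph) : Prop :=
  Relation.ReflTransGen (fun X Y => X.iso Y ∨ Step Rules X Y) G H

/-- A graph is provable in a system if there is a derivation from `∅` to it. -/
def Provable (Rules : LGraph → LGraph → Prop) (G : LGraph) : Prop :=
  Deriv Rules LGraph.empty G

/-- Formulas: unit, positive and negative atoms, par and tensor. -/
inductive Formula where
  | unit : Formula
  | pos (a : ℕ) : Formula
  | neg (a : ℕ) : Formula
  | par (φ ψ : Formula) : Formula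
  | tens (φ ψ : Formula) : Formula

/-- The graph `[φ]` of a formula `φ`. -/
def Formula.graph : Formula → LGraph
  | .unit => LGraph.empty
  | .pos a => single (a, true)
  | .neg a => single (a, false)
  | .par φ ψ => φ.graph.par ψ.graph
  | .tens φ ψ => φ.graph.tensor ψ.graph

/-- Structural equivalence of formulas: the smallest congruence making `⅋` and `⊗`
associative and commutative with unit `∘`. -/
inductive Formula.equiv : Formula → Formula → Prop
  | refl (φ) : Formula.equiv φ φ
  | symm {φ ψ} : Formula.equiv φ ψ → Formula.equiv ψ φ
  | trans {φ ψ χ} : Formula.equiv φ ψ → Formula.equiv ψ χ → Formula.equiv φ χ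
  | parComm (φ ψ) : Formula.equiv (.par φ ψ) (.par ψ φ)
  | parAssoc (φ ψ χ) : Formula.equiv (.par φ (.par ψ χ)) (.par (.par φ ψ) χ)
  | parUnit (φ) : Formula.equiv (.par φ .unit) φ
  | tensComm (φ ψ) : Formula.equiv (.tens φ ψ) (.tens ψ φ)
  | tensAssoc (φ ψ χ) : Formula.equiv (.tens φ (.tens ψ χ)) (.tens (.tens φ ψ) χ)
  | tensUnit (φ) : Formula.equiv (.tens φ .unit) φ
  | parCongr {φ φ' ψ ψ'} : Formula.equiv φ φ' → Formula.equiv ψ ψ' →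
      Formula.equiv (.par φ ψ) (.par φ' ψ')
  | tensCongr {φ φ' ψ ψ'} : Formula.equiv φ φ' → Formula.equiv ψ ψ' →
      Formula.equiv (.tens φ ψ) (.tens φ' ψ')

/-- A formula is unit-free if it contains no occurrence of the unit `∘`. -/
def Formula.UnitFree : Formula → Prop
  | .unit => False
  | .pos _ => True
  | .neg _ => True
  | .par φ ψ => φ.UnitFree ∧ ψ.UnitFree
  | .tens φ ψ => φ.UnitFree ∧ ψ.UnitFree

/-- The sequent calculus MLL° (multiplicative linear logic with mix) on multisets
of formulas. -/
inductive MLL : Multiset Formula → Prop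
  | ax (a : ℕ) : MLL {Formula.pos a, Formula.neg a}
  | tens {Γ Δ : Multiset Formula} (φ ψ : Formula) :
      MLL (φ ::ₘ Γ) → MLL (ψ ::ₘ Δ) → MLL (Formula.tens φ ψ ::ₘ (Γ + Δ))
  | par {Γ : Multiset Formula} (φ ψ : Formula) :
      MLL (φ ::ₘ ψ ::ₘ Γ) → MLL (Formula.par φ ψ ::ₘ Γ)
  | mix {Γ Δ : Multiset Formula} : MLL Γ → MLL Δ → MLL (Γ + Δ)

/-! The derivation is built from the clique composition `K⟨M₁, …, Mₙ⟩`, which is the tensor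
`M₁ ⊗ ⋯ ⊗ Mₙ`, by induction on the number of vertices of `G`. If `G` has a module `S` with
`1 < |S| < |V(G)|`, then `G⟨H⟩ ≅ (G/S)⟨…, G[S]⟨H|S⟩⟩` and likewise for the clique, so the
induction hypothesis for `G[S]` (applied inside a context) followed by the one for the quotient
`G/S` does the job. Otherwise either `G` is complete and there is nothing to do, or `G` is two
non-adjacent vertices and one `ss↓` step suffices, or, since no graph on three vertices is prime,
`G` has at least four vertices and is prime; then so is `Ḡ`, and one `p↓` step with `P = Ḡ` and all
`Nᵢ = ∅` turns `(M₁ ⅋ ∅) ⊗ ⋯ ⊗ (Mₙ ⅋ ∅)` into `Ḡ̄⟨M⟩ = G⟨M⟩`. -/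

namespace LGraph

def Iso.refl (G : LGraph) : Iso G G := ⟨Equiv.refl _, fun _ _ => Iff.rfl, fun _ => rfl⟩

def Iso.symm {G H : LGraph} (f : Iso G H) : Iso H G where
  toEquiv := f.toEquiv.symm
  adj_iff v w := by simpa using (f.adj_iff (f.toEquiv.symm v) (f.toEquiv.symm w)).symm
  label_eq v := by simpa using (f.label_eq (f.toEquiv.symm v)).symm

def Iso.trans {G H K : LGraph} (f : Iso G H) (g : Iso H K) : Iso G K where
  toEquiv := f.toEquiv.trans g.toEquiv
  adj_iff v w := (f.adj_iff v w).trans (g.adj_iff _ _)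
  label_eq _ := (g.label_eq _).trans (f.label_eq _)

def Iso.ofEq {G H : LGraph} (h : G = H) : Iso G H := h ▸ Iso.refl G

def Iso.ofIsEmpty (G H : LGraph) [IsEmpty G.V] [IsEmpty H.V] : Iso G H :=
  ⟨Equiv.equivOfIsEmpty _ _, fun v _ => isEmptyElim v, fun v => isEmptyElim v⟩

section Comp

variable {G : LGraph} {H : G.V → LGraph}

theorem compAdj_mk_self {v : G.V} {a b : (H v).V} :
    compAdj G H ⟨v, a⟩ ⟨v, b⟩ ↔ (H v).adj a b := by
  constructor
  · rintro (⟨w, x, y, hx, hy, hxy⟩ | ⟨hne, -⟩)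
    · obtain ⟨rfl, hax⟩ := Sigma.mk.inj_iff.mp hx
      obtain ⟨-, hby⟩ := Sigma.mk.inj_iff.mp hy
      rwa [eq_of_heq hax, eq_of_heq hby]
    · exact absurd rfl hne
  · exact fun h => Or.inl ⟨v, a, b, rfl, rfl, h⟩

theorem compAdj_mk_of_ne {v w : G.V} (hvw : v ≠ w) {a : (H v).V} {b : (H w).V} :
    compAdj G H ⟨v, a⟩ ⟨w, b⟩ ↔ G.adj v w := by
  constructor
  · rintro (⟨_, _, _, hx, hy, -⟩ | ⟨-, h⟩)
    · exact absurd ((Sigma.mk.inj_iff.mp hx).1.trans (Sigma.mk.inj_iff.mp hy).1.symm) hvw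
    · exact h
  · exact fun h => Or.inr ⟨hvw, h⟩

end Comp

def compCongrLeft (G' G : LGraph) (f : G'.V ≃ G.V)
    (hf : ∀ v w, G'.adj v w ↔ G.adj (f v) (f w)) (H : G.V → LGraph) :
    Iso (G'.comp fun v => H (f v)) (G.comp H) where
  toEquiv := Equiv.sigmaCongrLeft (β := fun v => (H v).V) f
  adj_iff := by
    rintro ⟨v, a⟩ ⟨w, b⟩
    by_cases hvw : v = w
    · subst hvw
      exact compAdj_mk_self.trans (compAdj_mk_self (H := H) (v := f v)).symm
    · exact (compAdj_mk_of_ne hvw).trans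
        ((hf v w).trans (compAdj_mk_of_ne (H := H) (f.injective.ne hvw)).symm)
  label_eq _ := rfl

def compCongrRight {G : LGraph} {H H' : G.V → LGraph} (g : ∀ v, Iso (H v) (H' v)) :
    Iso (G.comp H) (G.comp H') where
  toEquiv := Equiv.sigmaCongrRight fun v => (g v).toEquiv
  adj_iff := by
    rintro ⟨v, a⟩ ⟨w, b⟩
    by_cases hvw : v = w
    · subst hvw
      exact compAdj_mk_self.trans (((g v).adj_iff a b).trans compAdj_mk_self.symm)
    · exact (compAdj_mk_of_ne hvw).trans (compAdj_mk_of_ne hvw).symm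
  label_eq x := (g x.1).label_eq x.2

def plugCongr {C C' : LGraph} (f : Iso C C') {R : Set C.V} {R' : Set C'.V}
    (hR : ∀ v, v ∈ R ↔ f.toEquiv v ∈ R') {X X' : LGraph} (g : Iso X X') :
    Iso (C.plug R X) (C'.plug R' X') where
  toEquiv := Equiv.sumCongr f.toEquiv g.toEquiv
  adj_iff := by
    rintro (a | a) (b | b)
    exacts [f.adj_iff a b, hR a, hR b, g.adj_iff a b]
  label_eq := by
    rintro (a | a)
    exacts [f.label_eq a, g.label_eq a]

def plugCongrRight {C : LGraph} (R : Set C.V) {X X' : LGraph} (g : Iso X X') :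
    Iso (C.plug R X) (C.plug R X') :=
  plugCongr (Iso.refl C) (fun _ => Iff.rfl) g

def plugAssoc (C : LGraph) (R : Set C.V) (C' : LGraph) (R' : Set C'.V) (X : LGraph) :
    Iso (C.plug R (C'.plug R' X))
      ((C.plug R C').plug (fun x => Sum.elim (· ∈ R) (· ∈ R') x) X) where
  toEquiv := (Equiv.sumAssoc C.V C'.V X.V).symm
  adj_iff := by rintro (a | a | a) (b | b | b) <;> exact Iff.rfl
  label_eq := by rintro (a | a | a) <;> rfl

def plugEmptyContext (X : LGraph) (R : Set LGraph.empty.V) :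
    Iso (LGraph.empty.plug R X) X where
  toEquiv := Equiv.emptySum Empty X.V
  adj_iff := by rintro (a | a) (b | b) <;> first | exact a.elim | exact b.elim | exact Iff.rfl
  label_eq := by rintro (a | a) <;> first | exact a.elim | rfl

def plugComp (C : LGraph) (R : Set C.V) (X : LGraph) (H : (C.plug R X).V → LGraph) :
    Iso ((C.plug R X).comp H)
      ((C.comp fun c => H (.inl c)).plug {x | x.1 ∈ R} (X.comp fun x => H (.inr x))) where
  toEquiv := Equiv.sumSigmaDistrib fun v => (H v).V
  adj_iff := by
    rintro ⟨c | x, a⟩ ⟨d | y, b⟩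
    · by_cases hcd : c = d
      · subst hcd
        exact compAdj_mk_self.trans (compAdj_mk_self (H := fun c => H (.inl c)) (v := c)).symm
      · exact (compAdj_mk_of_ne (Sum.inl_injective.ne hcd)).trans (compAdj_mk_of_ne hcd).symm
    · exact compAdj_mk_of_ne Sum.inl_ne_inr
    · exact compAdj_mk_of_ne Sum.inr_ne_inl
    · by_cases hxy : x = y
      · subst hxy
        exact compAdj_mk_self.trans (compAdj_mk_self (H := fun x => H (.inr x)) (v := x)).symm
      · exact (compAdj_mk_of_ne (Sum.inr_injective.ne hxy)).trans (compAdj_mk_of_ne hxy).symm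
  label_eq := by rintro ⟨c | x, a⟩ <;> rfl

def compIsoPlug (C : LGraph) (R : Set C.V) (X : LGraph) {G : LGraph} (f : (C.plug R X).V ≃ G.V)
    (hf : ∀ v w, (C.plug R X).adj v w ↔ G.adj (f v) (f w)) (H : G.V → LGraph) :
    Iso (G.comp H)
      ((C.comp fun c => H (f (.inl c))).plug {x | x.1 ∈ R} (X.comp fun x => H (f (.inr x)))) :=
  (compCongrLeft _ G f hf H).symm.trans (plugComp C R X _)

def singleComp (a : Atom) (X : LGraph) : Iso ((single a).comp fun _ => X) X where
  toEquiv := Equiv.uniqueSigma fun _ : Unit => X.V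
  adj_iff := by
    rintro ⟨⟨⟩, x⟩ ⟨⟨⟩, y⟩
    exact compAdj_mk_self
  label_eq _ := rfl

def plugSingleComp (C : LGraph) (R : Set C.V) (a : Atom) (H : C.V → LGraph) (X : LGraph) :
    Iso ((C.plug R (single a)).comp (Sum.elim H fun _ => X)) ((C.comp H).plug {x | x.1 ∈ R} X) :=
  (plugComp C R (single a) _).trans (plugCongrRight _ (singleComp a X))

def plugIsoPar (C : LGraph) {R : Set C.V} (hR : ∀ v, v ∉ R) (X : LGraph) :
    Iso (C.plug R X) (C.par X) where
  toEquiv := Equiv.refl _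
  adj_iff := by
    rintro (a | a) (b | b)
    exacts [Iff.rfl, iff_of_false (hR a) id, iff_of_false (hR b) id, Iff.rfl]
  label_eq _ := rfl

def plugIsoTensor (C : LGraph) {R : Set C.V} (hR : ∀ v, v ∈ R) (X : LGraph) :
    Iso (C.plug R X) (C.tensor X) where
  toEquiv := Equiv.refl _
  adj_iff := by
    rintro (a | a) (b | b)
    exacts [Iff.rfl, iff_of_true (hR a) trivial, iff_of_true (hR b) trivial, Iff.rfl]
  label_eq _ := rfl

def parEmpty (X Y : LGraph) [IsEmpty Y.V] : Iso (X.par Y) X where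
  toEquiv := Equiv.sumEmpty X.V Y.V
  adj_iff := by
    rintro (a | a) (b | b) <;> first | exact Iff.rfl | exact isEmptyElim a | exact isEmptyElim b
  label_eq := by rintro (a | a) <;> first | rfl | exact isEmptyElim a

def tensorCongr {X X' Y Y' : LGraph} (f : Iso X X') (g : Iso Y Y') :
    Iso (X.tensor Y) (X'.tensor Y') where
  toEquiv := Equiv.sumCongr f.toEquiv g.toEquiv
  adj_iff := by
    rintro (a | a) (b | b)
    exacts [f.adj_iff a b, Iff.rfl, Iff.rfl, g.adj_iff a b]
  label_eq := by
    rintro (a | a)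
    exacts [f.label_eq a, g.label_eq a]

/-- Only used as the base of compositions, so its labels are arbitrary. -/
def clique (V : Type) [Fintype V] : LGraph where
  V := V
  adj v w := v ≠ w
  symm h := Ne.symm h
  irrefl _ h := h rfl
  label _ := (0, true)

def cliqueCompCongr {V W : Type} [Fintype V] [Fintype W] (f : V ≃ W) (H : W → LGraph) :
    Iso ((clique V).comp fun v => H (f v)) ((clique W).comp H) :=
  compCongrLeft (clique V) (clique W) f (fun _ _ => f.injective.ne_iff.symm) H

def cliqueCompIsoOfComplete {G : LGraph} (hG : ∀ v w, v ≠ w → G.adj v w) (H : G.V → LGraph) :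
    Iso ((clique G.V).comp H) (G.comp H) :=
  compCongrLeft (clique G.V) G (Equiv.refl _)
    (fun v w => ⟨hG v w, fun h e => G.irrefl w (e ▸ h)⟩) H

def cliqueCompIsoOfSubsingleton {G : LGraph} [Subsingleton G.V] (H : G.V → LGraph) :
    Iso ((clique G.V).comp H) (G.comp H) :=
  cliqueCompIsoOfComplete (fun v w hvw => absurd (Subsingleton.elim v w) hvw) H

def cliqueCompPlugSingle (C : LGraph) (R : Set C.V) (a : Atom) (H : C.V → LGraph)
    (X : LGraph) :
    Iso ((clique (C.plug R (single a)).V).comp (Sum.elim H fun _ => X))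
      (((clique C.V).comp H).plug {x | x.1 ∈ Set.univ} X) :=
  have hadj : ∀ v w, ((clique C.V).plug Set.univ (single a)).adj v w ↔
      (clique (C.plug R (single a)).V).adj v w := by
    rintro (c | ⟨⟩) (d | ⟨⟩)
    exacts [Sum.inl_injective.ne_iff.symm, iff_of_true trivial Sum.inl_ne_inr,
      iff_of_true trivial Sum.inr_ne_inl, iff_of_false id (· rfl)]
  (compCongrLeft ((clique C.V).plug Set.univ (single a)) (clique (C.plug R (single a)).V)
    (Equiv.refl _) hadj _).symm.trans
    (plugSingleComp (clique C.V) Set.univ a H X)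

noncomputable def induce (G : LGraph) (p : G.V → Prop) : LGraph where
  V := {v // p v}
  fintype := Fintype.ofFinite _
  adj a b := G.adj a b
  symm h := G.symm h
  irrefl a := G.irrefl a
  label a := G.label a

/-- The quotient `G / S` by a module `S ∋ s`, whose contracted vertex has an arbitrary label. -/
noncomputable def quotient (G : LGraph) (S : Set G.V) (s : G.V) : LGraph :=
  (G.induce (· ∉ S)).plug {c | G.adj c.1 s} (single (0, true))

open Classical in
noncomputable def splitEquiv {α : Type} (S : Set α) : {v // v ∉ S} ⊕ {v // v ∈ S} ≃ α :=
  (Equiv.sumComm _ _).trans (Equiv.sumCompl (· ∈ S))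

noncomputable def cliqueCompIsoPlug (G : LGraph) (S : Set G.V) (H : G.V → LGraph) :
    Iso ((clique G.V).comp H)
      (((clique (G.induce (· ∉ S)).V).comp fun c => H c.1).plug {x | x.1 ∈ Set.univ}
        ((clique (G.induce (· ∈ S)).V).comp fun x => H x.1)) :=
  compIsoPlug (clique (G.induce (· ∉ S)).V) Set.univ (clique (G.induce (· ∈ S)).V)
    (G := clique G.V) (splitEquiv S) (by
      rintro (c | x) (d | y)
      · exact (Subtype.val_injective.ne_iff).symm
      · exact iff_of_true trivial fun h : c.1 = y.1 => c.2 (h ▸ y.2)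
      · exact iff_of_true trivial fun h : x.1 = d.1 => d.2 (h ▸ x.2)
      · exact (Subtype.val_injective.ne_iff).symm) H

noncomputable def IsModule.compIsoPlug {G : LGraph} {S : Set G.V} (hS : G.IsModule S) {s : G.V}
    (hs : s ∈ S) (H : G.V → LGraph) :
    Iso (G.comp H)
      (((G.induce (· ∉ S)).comp fun c => H c.1).plug {x | x.1 ∈ {c | G.adj c.1 s}}
        ((G.induce (· ∈ S)).comp fun x => H x.1)) :=
  LGraph.compIsoPlug (G.induce (· ∉ S)) {c | G.adj c.1 s} (G.induce (· ∈ S)) (G := G)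
    (splitEquiv S) (by
      rintro (c | x) (d | y)
      · exact Iff.rfl
      · exact hS c.1 c.2 s hs y.1 y.2
      · exact (hS d.1 d.2 s hs x.1 x.2).trans ⟨G.symm, G.symm⟩
      · exact Iff.rfl) H

theorem dual_dual_adj {G : LGraph} {v w : G.V} : G.dual.dual.adj v w ↔ G.adj v w :=
  ⟨fun ⟨hvw, h⟩ => not_not.mp fun hn => h ⟨hvw, hn⟩,
    fun h => ⟨fun e => G.irrefl w (e ▸ h), fun hd => hd.2 h⟩⟩

theorem isModule_dual_iff {G : LGraph} {S : Set G.V} : G.dual.IsModule S ↔ G.IsModule S := by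
  refine forall₂_congr fun v hv => forall₂_congr fun x hx => forall₂_congr fun y hy => ?_
  have hvx : v ≠ x := fun e => hv (e ▸ hx)
  have hvy : v ≠ y := fun e => hv (e ▸ hy)
  show (v ≠ x ∧ ¬ G.adj v x ↔ v ≠ y ∧ ¬ G.adj v y) ↔ _
  simp only [hvx, hvy, ne_eq, not_false_eq_true, true_and, not_iff_not]

theorem prime_of_forall_isModule {G : LGraph} (h2 : 2 ≤ Fintype.card G.V)
    (h : ∀ S, G.IsModule S → S.Nontrivial → S = Set.univ) : G.Prime := by
  refine ⟨h2, fun S hS => ?_⟩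
  by_cases hnt : S.Nontrivial
  · exact Or.inr (Or.inr (h S hS hnt))
  · exact (Set.not_nontrivial_iff.mp hnt).eq_empty_or_singleton.imp_right Or.inl

theorem isModule_pair {G : LGraph} {x y z : G.V} (hcover : ∀ t, t = x ∨ t = y ∨ t = z)
    (h : G.adj z x ↔ G.adj z y) : G.IsModule {x, y} := by
  intro v hv a ha b hb
  obtain rfl : v = z := by
    rcases hcover v with rfl | rfl | rfl <;> simp_all
  rcases ha with rfl | rfl <;> rcases hb with rfl | rfl <;> tauto

theorem exists_isModule_of_card_eq_three {G : LGraph} (h3 : Fintype.card G.V = 3) :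
    ∃ S, G.IsModule S ∧ S.Nontrivial ∧ S ≠ Set.univ := by
  classical
  obtain ⟨a, b, c, hab, hac, hbc, huniv⟩ := Finset.card_eq_three.mp h3
  have hcover : ∀ t, t = a ∨ t = b ∨ t = c := fun t => by
    simpa [huniv] using Finset.mem_univ t
  have pair : ∀ {x y z : G.V}, x ≠ y → x ≠ z → y ≠ z → (∀ t, t = x ∨ t = y ∨ t = z) →
      (G.adj z x ↔ G.adj z y) → ∃ S, G.IsModule S ∧ S.Nontrivial ∧ S ≠ Set.univ :=
    @fun x y z hxy hxz hyz hcover h => ⟨{x, y}, isModule_pair hcover h, Set.nontrivial_pair hxy,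
      fun hS => by
        have hz : z ∈ ({x, y} : Set G.V) := hS ▸ Set.mem_univ z
        simp [hxz.symm, hyz.symm] at hz⟩
  have sym : ∀ {u w : G.V}, G.adj u w ↔ G.adj w u := ⟨G.symm, G.symm⟩
  by_cases h₁ : G.adj c a ↔ G.adj c b
  · exact pair hab hac hbc hcover h₁
  by_cases h₂ : G.adj b a ↔ G.adj b c
  · exact pair hac hab hbc.symm (fun t => by have := hcover t; tauto) h₂
  by_cases h₃ : G.adj a b ↔ G.adj a c
  · exact pair hbc hab.symm hac.symm (fun t => by have := hcover t; tauto) h₃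
  -- each vertex is adjacent to exactly one of the other two, which is impossible for three
  rw [@sym c a, @sym c b, @sym b a] at *
  tauto

end LGraph

open LGraph

noncomputable def finSuccSumEquiv (n : ℕ) : Unit ⊕ Fin n ≃ Fin (n + 1) :=
  Equiv.ofBijective (Sum.elim (fun _ => 0) Fin.succ) <| by
    constructor
    · rintro (⟨⟩ | i) (⟨⟩ | j) h
      · rfl
      · exact absurd h.symm (Fin.succ_ne_zero j)
      · exact absurd h (Fin.succ_ne_zero i)
      · exact congrArg Sum.inr (Fin.succ_injective n h)
    · intro i
      induction i using Fin.cases with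
      | zero => exact ⟨.inl (), rfl⟩
      | succ i => exact ⟨.inr i, rfl⟩

noncomputable def bigTensorIsoCliqueComp :
    (n : ℕ) → (M : Fin n → LGraph) → Iso (bigTensor n M) ((clique (Fin n)).comp M)
  | 0, M =>
    haveI : IsEmpty (bigTensor 0 M).V := inferInstanceAs (IsEmpty Empty)
    haveI : IsEmpty ((clique (Fin 0)).comp M).V := ⟨fun x => x.1.elim0⟩
    Iso.ofIsEmpty _ _
  | n + 1, M =>
    have hadj : ∀ v w, ((single (0, true)).plug Set.univ (clique (Fin n))).adj v w ↔
        (clique (Fin (n + 1))).adj (finSuccSumEquiv n v) (finSuccSumEquiv n w) := by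
      rintro (⟨⟩ | i) (⟨⟩ | j)
      exacts [iff_of_false id (· rfl), iff_of_true trivial (Fin.succ_ne_zero j).symm,
        iff_of_true trivial (Fin.succ_ne_zero i), (Fin.succ_injective n).ne_iff.symm]
    (tensorCongr (singleComp (0, true) (M 0)).symm
        (bigTensorIsoCliqueComp n fun i => M i.succ)).trans <|
      (plugIsoTensor _ (R := Set.univ) (fun _ => trivial) _).symm.trans
        (compIsoPlug (single (0, true)) Set.univ (clique (Fin n)) (G := clique (Fin (n + 1)))
          (finSuccSumEquiv n) hadj M).symm

section Deriv

variable {Rules : LGraph → LGraph → Prop}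

theorem Deriv.of_iso {G H : LGraph} (f : Iso G H) :
    Deriv Rules G H :=
  Relation.ReflTransGen.single (Or.inl ⟨f⟩)

theorem Deriv.trans {G H K : LGraph}
    (h₁ : Deriv Rules G H) (h₂ : Deriv Rules H K) : Deriv Rules G K :=
  Relation.ReflTransGen.trans h₁ h₂

theorem Deriv.of_rule {p c : LGraph} (h : Rules p c) :
    Deriv Rules p c :=
  Relation.ReflTransGen.single (Or.inr ⟨LGraph.empty, ∅, p, c, h,
    ⟨(plugEmptyContext p ∅).symm⟩, ⟨(plugEmptyContext c ∅).symm⟩⟩)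

theorem Deriv.plug (C : LGraph) (R : Set C.V) {X Y : LGraph}
    (h : Deriv Rules X Y) : Deriv Rules (C.plug R X) (C.plug R Y) := by
  induction h with
  | refl => exact .refl
  | tail _ hstep ih =>
    refine ih.tail ?_
    rcases hstep with hiso | ⟨C', R', p, c, hr, hp, hc⟩
    · exact Or.inl (Nonempty.map (plugCongrRight R) hiso)
    · exact Or.inr ⟨C.plug R C', fun x => Sum.elim (· ∈ R) (· ∈ R') x, p, c, hr,
        Nonempty.map (fun f => (plugCongrRight R f).trans (plugAssoc C R C' R' p)) hp,
        Nonempty.map (fun f => (plugCongrRight R f).trans (plugAssoc C R C' R' c)) hc⟩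

end Deriv

theorem deriv_cliqueComp_of_isModule {G : LGraph} {S : Set G.V} (hS : G.IsModule S)
    (hnt : S.Nontrivial) (hne : S ≠ Set.univ)
    (ih : ∀ G' : LGraph, Fintype.card G'.V < Fintype.card G.V → ∀ H : G'.V → LGraph,
      (∀ v, Nonempty (H v).V) → Deriv GSRule ((clique G'.V).comp H) (G'.comp H))
    (H : G.V → LGraph) (hH : ∀ v, Nonempty (H v).V) :
    Deriv GSRule ((clique G.V).comp H) (G.comp H) := by
  classical
  obtain ⟨s, hs⟩ := hnt.nonempty
  obtain ⟨t, ht⟩ := (Set.ne_univ_iff_exists_notMem S).mp hne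
  set C := G.induce (· ∉ S)
  set B := G.induce (· ∈ S)
  set X := B.comp fun x => H x.1
  have hBS : Fintype.card B.V = Fintype.card S := Fintype.card_congr (Equiv.refl _)
  have hB : Fintype.card B.V < Fintype.card G.V := hBS ▸ Fintype.card_subtype_lt ht
  have hQ : Fintype.card (G.quotient S s).V < Fintype.card G.V := by
    have h2 : 1 < Fintype.card S := Fintype.one_lt_card_iff_nontrivial.mpr hnt.coe_sort
    have hCS : Fintype.card C.V = Fintype.card {v // v ∉ S} := Fintype.card_congr (Equiv.refl _)
    have hC : Fintype.card C.V = Fintype.card G.V - Fintype.card S :=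
      hCS.trans (Fintype.card_subtype_compl _)
    have hQC : Fintype.card (G.quotient S s).V = Fintype.card C.V + 1 := Fintype.card_sum ..
    omega
  have hHQ : ∀ v : (G.quotient S s).V,
      Nonempty ((Sum.elim (fun c : C.V => H c.1) fun _ : Unit => X) v).V := by
    rintro (c | ⟨⟩)
    exacts [hH c.1, ⟨⟨⟨s, hs⟩, (hH s).some⟩⟩]
  exact (Deriv.of_iso (cliqueCompIsoPlug G S H)).trans <|
    (Deriv.plug _ _ (ih B hB _ fun x => hH x.1)).trans <|
    (Deriv.of_iso (cliqueCompPlugSingle C _ (0, true) _ X).symm).trans <|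
    (ih _ hQ _ hHQ).trans <|
    Deriv.of_iso ((plugSingleComp C _ (0, true) _ X).trans (hS.compIsoPlug hs H).symm)

theorem deriv_cliqueComp_of_card_eq_two {G : LGraph} (h2 : Fintype.card G.V = 2) {v w : G.V}
    (hvw : v ≠ w) (hadj : ¬ G.adj v w) (H : G.V → LGraph) (hH : ∀ v, Nonempty (H v).V) :
    Deriv GSRule ((clique G.V).comp H) (G.comp H) := by
  classical
  have hcover : ∀ u, u ≠ w → u = v := by
    have huniv : ({v, w} : Finset G.V) = Finset.univ :=
      Finset.eq_univ_of_card _ ((Finset.card_pair hvw).trans h2.symm)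
    intro u huw
    have hu := Finset.mem_univ u
    rw [← huniv] at hu
    simpa [huw] using hu
  -- split along the module `{w}`: the clique side becomes `H v ⊗ H w`, the graph side `H v ⅋ H w`
  set S : Set G.V := {w}
  set C := G.induce (· ∉ S)
  set B := G.induce (· ∈ S)
  have : Subsingleton C.V := ⟨fun x y => Subtype.ext ((hcover x.1 x.2).trans (hcover y.1 y.2).symm)⟩
  have : Subsingleton B.V := ⟨fun x y => Subtype.ext (x.2.trans y.2.symm)⟩
  have hS : G.IsModule S := fun _ _ x hx y hy => by rw [hx, hy]
  have hR : ∀ x : (C.comp fun c => H c.1).V, x ∉ {x | x.1 ∈ {c | G.adj c.1 w}} :=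
    fun x hx => hadj (hcover x.1.1 x.1.2 ▸ hx)
  have hU : {x : (C.comp fun c => H c.1).V | x.1 ∈ Set.univ} ≠ ∅ :=
    Set.nonempty_iff_ne_empty.mp ⟨⟨⟨v, hvw⟩, (hH v).some⟩, trivial⟩
  have ss := GSRule.ss (B.comp fun x => H x.1) _ _ ⟨⟨⟨w, rfl⟩, (hH w).some⟩⟩ hU
  exact (Deriv.of_iso ((cliqueCompIsoPlug G S H).trans
      (plugCongr (cliqueCompIsoOfSubsingleton _) (R' := {x | x.1 ∈ Set.univ})
        (fun _ => iff_of_true trivial trivial) (cliqueCompIsoOfSubsingleton _)))).trans <|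
    (Deriv.of_rule ss).trans <|
    Deriv.of_iso ((plugIsoPar _ hR _).symm.trans (hS.compIsoPlug rfl H).symm)

theorem deriv_cliqueComp_of_prime_dual {G : LGraph} (hG : G.dual.Prime)
    (h4 : 4 ≤ Fintype.card G.V) (H : G.V → LGraph) (hH : ∀ v, Nonempty (H v).V) :
    Deriv GSRule ((clique G.V).comp H) (G.comp H) := by
  let e := Fintype.equivFin G.V
  let M : Fin (Fintype.card G.V) → LGraph := fun i => H (e.symm i)
  have : IsEmpty LGraph.empty.V := inferInstanceAs (IsEmpty Empty)
  have : IsEmpty (G.dual.comp fun _ => LGraph.empty).V := ⟨fun x => isEmptyElim x.2⟩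
  have premise : Iso ((clique G.V).comp H) (bigTensor _ fun i => (M i).par LGraph.empty) :=
    (cliqueCompCongr e.symm H).symm.trans <|
      (compCongrRight fun i => parEmpty (M i) _).symm.trans (bigTensorIsoCliqueComp _ _).symm
  have conclusion : Iso ((G.dual.dual.comp fun v => M (e v)).par
      (G.dual.comp fun _ => LGraph.empty)) (G.comp H) :=
    (parEmpty _ _).trans <|
      (compCongrLeft G.dual.dual G (Equiv.refl _) (fun _ _ => dual_dual_adj) _).trans <|
      compCongrRight fun v => Iso.ofEq (congrArg H (e.symm_apply_apply v))
  exact (Deriv.of_iso premise).trans <|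
    (Deriv.of_rule (GSRule.p _ G.dual e M _ hG h4 fun i => hH _)).trans (Deriv.of_iso conclusion)

theorem deriv_cliqueComp (G : LGraph) (H : G.V → LGraph) (hH : ∀ v, Nonempty (H v).V) :
    Deriv GSRule ((clique G.V).comp H) (G.comp H) := by
  induction hn : Fintype.card G.V using Nat.strong_induction_on generalizing G with
  | _ n ih =>
  by_cases hmod : ∃ S, G.IsModule S ∧ S.Nontrivial ∧ S ≠ Set.univ
  · obtain ⟨S, hS, hnt, hne⟩ := hmod
    exact deriv_cliqueComp_of_isModule hS hnt hne
      (fun G' hG' H' hH' => ih _ (hn ▸ hG') G' H' hH' rfl) H hH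
  by_cases hcomplete : ∀ v w, v ≠ w → G.adj v w
  · exact Deriv.of_iso (cliqueCompIsoOfComplete hcomplete H)
  push Not at hmod hcomplete
  obtain ⟨v, w, hvw, hadj⟩ := hcomplete
  have h2 : 2 ≤ Fintype.card G.V := Fintype.one_lt_card_iff.mpr ⟨v, w, hvw⟩
  obtain h | h | h : Fintype.card G.V = 2 ∨ Fintype.card G.V = 3 ∨ 4 ≤ Fintype.card G.V := by
    omega
  · exact deriv_cliqueComp_of_card_eq_two h hvw hadj H hH
  · obtain ⟨S, hS, hnt, hne⟩ := exists_isModule_of_card_eq_three h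
    exact absurd (hmod S hS hnt) hne
  · refine deriv_cliqueComp_of_prime_dual ?_ h H hH
    exact prime_of_forall_isModule h2 fun S hS => hmod S (isModule_dual_iff.mp hS)

theorem tensor_to_composition_general (n : ℕ) (G : LGraph) (e : G.V ≃ Fin n)
    (M : Fin n → LGraph) (hM : ∀ i, Nonempty (M i).V) :
    Deriv GSRule (bigTensor n M) (G.comp fun v => M (e v)) :=
  (Deriv.of_iso ((bigTensorIsoCliqueComp n M).trans (cliqueCompCongr e M).symm)).trans
    (deriv_cliqueComp G _ fun v => hM (e v))

/-- If `G, M₁, …, Mₙ` are non-empty graphs with `|V(G)| = n`,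
then there is a GS derivation from `M₁ ⊗ ⋯ ⊗ Mₙ` to `G⟨M₁, …, Mₙ⟩`. -/
theorem tensor_to_composition (n : ℕ) (G : LGraph) (e : G.V ≃ Fin n)
    (hG : Nonempty G.V) (M : Fin n → LGraph) (hM : ∀ i, Nonempty (M i).V) :
    Deriv GSRule (bigTensor n M) (G.comp fun v => M (e v)) :=
  tensor_to_composition_general n G e M hM

end GSP
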